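/- arXiv:2510.16859 — 2 statements merged into one kernel-verified Lean document; each statement's English description precedes it below -/
import Mathlib

section
/- Let (M,J,g) be a compact almost Hermitian manifold of complex dimension n and λ, μ real constants with nλ + μ = 0. Then for every conformal metric g̃ = e^{2f} g one has λ S̃₁^Ch + μ S̃₂^Ch = e^{−2f}(λ S₁^Ch + μ S₂^Ch); in particular the mixed Chern scalar curvature λ S₁^Ch + μ S₂^Ch has the same sign for every metric in the conformal class [g]. -/
/-- The Kodaira dimension of a compact almost complex manifold `(M,J)` (in the sense of
Chen–Zhang), computed from its plurigenera `P m = dim_ℂ H⁰(M, K_M^{⊗m})`: it equals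
`⊥ = -∞` if every plurigenus `P m`, `m ≥ 1`, vanishes, and otherwise equals
`limsup_{m → ∞} (log P m / log m)`, viewed as an extended real number. -/
noncomputable def kodairaDimension (P : ℕ → ℕ) : EReal := by
  classical
  exact if ∀ m : ℕ, 1 ≤ m → P m = 0 then ⊥
    else Filter.limsup (fun m : ℕ => ((Real.log (P m : ℝ) / Real.log (m : ℝ) : ℝ) : EReal))
      Filter.atTop

/-- A compact almost Hermitian manifold `(M, J, g)` of complex dimension `n`, recorded through
the scalar-valued geometric quantities attached to it: the Riemannian volume measure `dV_g`,
the Riemannian scalar curvature `s`, the `J`-scalar curvature `s_J`, the two Chern scalar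
curvatures `S₁^Ch`, `S₂^Ch`, the pointwise squared norms of the Gray–Hervella components
`(dF)⁻`, `(dF)⁺`, `(dF)₀⁺`, `N⁰`, `α_F` of `∇F` (where `F(X,Y) = g(JX,Y)` is the fundamental
`2`-form, `α_F = Jδ^g F` the Lee form and `N⁰ = N - 𝔟N`), the codifferential `δ^g α_F` of the
Lee form, together with the plurigenera of `(M,J)` and the relevant complex-geometric
properties of `(M,J,g)`.  The standard pointwise identities relating these quantities
(Gauduchon's formulas) are included as fields, pinning down their meaning. -/
structure CompactAlmostHermitian where
  /-- the underlying manifold -/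
  M : Type
  [topM : TopologicalSpace M]
  [cptM : CompactSpace M]
  [neM : Nonempty M]
  [measM : MeasurableSpace M]
  [borelM : BorelSpace M]
  /-- the complex dimension -/
  n : ℕ
  /-- the Riemannian volume measure `dV_g` -/
  vol : MeasureTheory.Measure M
  vol_finite : MeasureTheory.IsFiniteMeasure vol
  vol_pos : vol.IsOpenPosMeasure
  /-- the Riemannian scalar curvature `s` of `g` -/
  s : M → ℝ
  /-- the `J`-scalar curvature (`⋆`-scalar curvature) `s_J` of `(J,g)`,
  `s_J = Σ_A Ric_J(e_A, e_A)` with `Ric_J(X,Y) = Σ_A R(e_A, X, J e_A, J Y)` -/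
  sJ : M → ℝ
  /-- the Chern scalar curvature `S₁^Ch = Σ_{i,j} R^Ch(u_ī, u_i, u_j, u_j̄)` -/
  S1 : M → ℝ
  /-- the second Chern scalar curvature `S₂^Ch = Σ_{i,j} R^Ch(u_ī, u_j, u_i, u_j̄)` -/
  S2 : M → ℝ
  /-- pointwise squared norm `|(dF)⁻|²` of the `(3,0)+(0,3)`-component of `dF` -/
  dFminusSq : M → ℝ
  /-- pointwise squared norm `|(dF)⁺|²` of the `(2,1)+(1,2)`-component of `dF` -/
  dFplusSq : M → ℝ
  /-- pointwise squared norm `|(dF)₀⁺|²` of the primitive part of `(dF)⁺` -/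
  dFplus0Sq : M → ℝ
  /-- pointwise squared norm `|dF|²` -/
  dFSq : M → ℝ
  /-- pointwise squared norm `|N⁰|²`, where `N⁰ = N - 𝔟N` is the Nijenhuis tensor minus
  its totally skew-symmetric part -/
  NzeroSq : M → ℝ
  /-- pointwise squared norm `|α_F|²` of the Lee form `α_F = Jδ^g F` -/
  leeSq : M → ℝ
  /-- the codifferential `δ^g α_F` of the Lee form -/
  divLee : M → ℝ
  cont_s : Continuous s
  cont_sJ : Continuous sJ
  cont_S1 : Continuous S1
  cont_S2 : Continuous S2
  cont_dFminusSq : Continuous dFminusSq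
  cont_dFplusSq : Continuous dFplusSq
  cont_dFplus0Sq : Continuous dFplus0Sq
  cont_dFSq : Continuous dFSq
  cont_NzeroSq : Continuous NzeroSq
  cont_leeSq : Continuous leeSq
  cont_divLee : Continuous divLee
  nn_dFminusSq : ∀ p, 0 ≤ dFminusSq p
  nn_dFplusSq : ∀ p, 0 ≤ dFplusSq p
  nn_dFplus0Sq : ∀ p, 0 ≤ dFplus0Sq p
  nn_dFSq : ∀ p, 0 ≤ dFSq p
  nn_NzeroSq : ∀ p, 0 ≤ NzeroSq p
  nn_leeSq : ∀ p, 0 ≤ leeSq p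
  /-- `dF` vanishes exactly when both `(dF)⁺` and `(dF)⁻` do:
  `|dF|² = |(dF)⁺|² + |(dF)⁻|²` -/
  dF_decomp : ∀ p, dFSq p = dFplusSq p + dFminusSq p
  /-- `(dF)⁺ = (dF)₀⁺ + α_F ∧ F/(n-1)`, so `|(dF)⁺|² = |(dF)₀⁺|² + |α_F|²/(n-1)` -/
  dFplus_decomp : ∀ p, dFplusSq p = dFplus0Sq p + leeSq p / ((n : ℝ) - 1)
  /-- the relation between the Chern scalar curvature `S₁^Ch` and
  the Riemannian scalar curvature `s` -/
  S1_eq : ∀ p, S1 p = s p / 2 - (5 / 12) * dFminusSq p + (1 / 16) * NzeroSq p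
      + (1 / 4) * dFplus0Sq p + leeSq p / (4 * ((n : ℝ) - 1)) - (1 / 2) * divLee p
  /-- the relation between the second Chern scalar curvature `S₂^Ch` and
  the Riemannian scalar curvature `s` -/
  S2_eq : ∀ p, S2 p = s p / 2 - (1 / 12) * dFminusSq p + (1 / 32) * NzeroSq p
      + (1 / 4) * dFplus0Sq p + (1 / (4 * ((n : ℝ) - 1)) - 1 / 2) * leeSq p - divLee p
  /-- the relation between the `J`-scalar curvature and the Riemannian scalar curvature -/
  sJ_eq : ∀ p, sJ p = s p - (2 / 3) * dFminusSq p + (1 / 4) * NzeroSq p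
      - leeSq p - 2 * divLee p
  /-- the plurigenera `P m = dim_ℂ H⁰(M, K_M^{⊗m})` of `(M,J)`, the complex dimensions of the
  spaces of pseudoholomorphic (i.e. `∂̄`-closed) sections of the pluricanonical bundles -/
  plurigenus : ℕ → ℕ
  /-- `(M,J,g)` is a Kähler manifold, i.e. `∇F = 0` -/
  isKaehler : Prop
  isKaehler_iff : isKaehler ↔ ∀ p, dFSq p = 0 ∧ NzeroSq p = 0
  /-- the first Chern class `c₁(M,J)` vanishes in real cohomology -/
  c1Zero : Prop
  /-- the Chern–Ricci form `ρ_g` of the metric `g` vanishes identically -/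
  chernRicciZero : Prop
  /-- `(M,J)` is a Moishezon manifold (bimeromorphic to a projective manifold) -/
  moishezon : Prop
  /-- `(M,J)` is uniruled (covered by rational curves) -/
  uniruled : Prop
  /-- the Riemannian metric `g` is flat -/
  flatMetric : Prop

attribute [instance] CompactAlmostHermitian.topM CompactAlmostHermitian.cptM
  CompactAlmostHermitian.neM CompactAlmostHermitian.measM CompactAlmostHermitian.borelM
  CompactAlmostHermitian.vol_finite

/-- The conformal class of a compact almost Hermitian manifold `(M,J,g)`: it records the set
of smooth real-valued functions on `M`, the Chern Laplacian `Δ_g^Ch` of `g` (equal to the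
Hodge Laplacian plus pairing with the Lee form, `Δ_g^Ch f = Δ_g f + ⟨α_F, df⟩`), and, for
every smooth conformal factor `f`, the two Chern scalar curvatures `S₁c f`, `S₂c f` of the
conformally changed metric `e^{2f} g`, pinned down by the conformal transformation laws
`e^{2f} S̃₁^Ch = S₁^Ch + n Δ_g^Ch f` and `e^{2f} S̃₂^Ch = S₂^Ch + Δ_g^Ch f`. -/
structure ConformalFamily where
  /-- the underlying compact almost Hermitian manifold `(M,J,g)` -/
  X : CompactAlmostHermitian
  /-- the set of smooth real-valued functions on `M` -/
  Smooth : Set (X.M → ℝ)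
  smooth_const : ∀ c : ℝ, (fun _ => c) ∈ Smooth
  /-- the Chern Laplacian `Δ_g^Ch` of the metric `g` -/
  chernLap : (X.M → ℝ) → X.M → ℝ
  /-- the Hodge Laplacian `Δ_g = dδ^g + δ^g d` of the metric `g` -/
  hodgeLap : (X.M → ℝ) → X.M → ℝ
  /-- the pairing `f ↦ ⟨α_F, df⟩` with the Lee form -/
  leePair : (X.M → ℝ) → X.M → ℝ
  /-- `Δ_g^Ch f = Δ_g f + ⟨α_F, df⟩` -/
  chernLap_eq : ∀ f ∈ Smooth, ∀ p, chernLap f p = hodgeLap f p + leePair f p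
  /-- the Chern scalar curvature `S₁^Ch` of the conformal metric `e^{2f} g` -/
  S1c : (X.M → ℝ) → X.M → ℝ
  /-- the second Chern scalar curvature `S₂^Ch` of the conformal metric `e^{2f} g` -/
  S2c : (X.M → ℝ) → X.M → ℝ
  /-- conformal law `e^{2f} S̃₁^Ch = S₁^Ch + n Δ_g^Ch f` -/
  S1c_eq : ∀ f ∈ Smooth, ∀ p, Real.exp (2 * f p) * S1c f p = X.S1 p + X.n * chernLap f p
  /-- conformal law `e^{2f} S̃₂^Ch = S₂^Ch + Δ_g^Ch f` -/
  S2c_eq : ∀ f ∈ Smooth, ∀ p, Real.exp (2 * f p) * S2c f p = X.S2 p + chernLap f p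
  /-- the zero conformal factor recovers the original metric -/
  S1c_zero : S1c (fun _ => 0) = X.S1
  S2c_zero : S2c (fun _ => 0) = X.S2

/-- **Remark 3.3.** Let `(M,J,g)` be a compact almost Hermitian manifold of complex
dimension `n` and `λ, μ` real constants with `nλ + μ = 0`.  Then for every conformal metric
`g̃ = e^{2f} g` one has `λ S̃₁^Ch + μ S̃₂^Ch = e^{-2f} (λ S₁^Ch + μ S₂^Ch)`; in particular
the mixed Chern scalar curvature `λ S₁^Ch + μ S₂^Ch` has the same sign for every metric in
the conformal class `[g]`. -/
theorem mixed_chern_scalar_conformal_of_trace_free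
    (C : ConformalFamily)
    (lam mu : ℝ) (h : (C.X.n : ℝ) * lam + mu = 0) :
    ∀ f ∈ C.Smooth, ∀ p,
      (lam * C.S1c f p + mu * C.S2c f p
          = Real.exp (-(2 * f p)) * (lam * C.X.S1 p + mu * C.X.S2 p)) ∧
      ((0 < lam * C.S1c f p + mu * C.S2c f p ↔ 0 < lam * C.X.S1 p + mu * C.X.S2 p) ∧
        (lam * C.S1c f p + mu * C.S2c f p = 0 ↔ lam * C.X.S1 p + mu * C.X.S2 p = 0) ∧
        (lam * C.S1c f p + mu * C.S2c f p < 0 ↔ lam * C.X.S1 p + mu * C.X.S2 p < 0)) := by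
  intro f hf p
  have h1 := C.S1c_eq f hf p
  have h2 := C.S2c_eq f hf p
  have hE : (0:ℝ) < Real.exp (2 * f p) := Real.exp_pos _
  have key : Real.exp (2 * f p) * (lam * C.S1c f p + mu * C.S2c f p)
      = lam * C.X.S1 p + mu * C.X.S2 p := by
    have e : Real.exp (2 * f p) * (lam * C.S1c f p + mu * C.S2c f p)
        = lam * (Real.exp (2 * f p) * C.S1c f p) + mu * (Real.exp (2 * f p) * C.S2c f p) := by
      ring
    rw [e, h1, h2]
    linear_combination C.chernLap f p * h
  have heq : lam * C.S1c f p + mu * C.S2c f p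
      = Real.exp (-(2 * f p)) * (lam * C.X.S1 p + mu * C.X.S2 p) := by
    rw [Real.exp_neg, ← key]
    field_simp
  have hE' : (0:ℝ) < Real.exp (-(2 * f p)) := Real.exp_pos _
  refine ⟨heq, ?_, ?_, ?_⟩
  · rw [heq]
    exact ⟨fun h' => by nlinarith, fun h' => mul_pos hE' h'⟩
  · rw [heq]
    constructor
    · intro h'
      rcases mul_eq_zero.mp h' with h'' | h''
      · exact absurd h'' hE'.ne'
      · exact h''
    · intro h'; rw [h', mul_zero]
  · rw [heq]
    exact ⟨fun h' => by nlinarith, fun h' => mul_neg_of_pos_of_neg hE' h'⟩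
end

section
/- For every n ≥ 1 and all indices i, j, k, l ∈ {1, …, n}, the integral over the unit sphere S^{2n−1} ⊂ ℂⁿ (with its standard volume measure) of the monomial ξ̄^i ξ^j ξ^k ξ̄^l in the complex coordinates ξ = (ξ¹, …, ξⁿ) equals ((δ_{ij} δ_{kl} + δ_{ik} δ_{jl}) / (n(n+1))) · Vol(S^{2n−1}). -/
set_option maxHeartbeats 1000000


noncomputable instance euclideanComplexMeasurableSpace (n : ℕ) :
    MeasurableSpace (EuclideanSpace ℂ (Fin n)) := WithLp.measurableSpace 2 _

instance euclideanComplexBorel (n : ℕ) : BorelSpace (EuclideanSpace ℂ (Fin n)) :=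
  PiLp.borelSpace 2

noncomputable instance euclideanComplexRealInner (n : ℕ) :
    InnerProductSpace ℝ (EuclideanSpace ℂ (Fin n)) :=
  InnerProductSpace.rclikeToReal ℂ _

noncomputable instance euclideanComplexMeasureSpace (n : ℕ) :
    MeasureTheory.MeasureSpace (EuclideanSpace ℂ (Fin n)) :=
  measureSpaceOfInnerProductSpace

/-- The standard (Riemannian) volume measure on the round unit sphere
`S^{2n-1} = {ξ ∈ ℂⁿ : |ξ| = 1}`. -/
noncomputable def complexSphereMeasure (n : ℕ) :
    MeasureTheory.Measure (Metric.sphere (0 : EuclideanSpace ℂ (Fin n)) 1) :=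
  (MeasureTheory.volume : MeasureTheory.Measure (EuclideanSpace ℂ (Fin n))).toSphere

open MeasureTheory Metric Complex Set
open scoped Pointwise

namespace Berger

variable {n : ℕ}

/-- restriction of an isometry to the sphere, as a map -/
noncomputable def sphereFun (e : EuclideanSpace ℂ (Fin n) ≃ₗᵢ[ℝ] EuclideanSpace ℂ (Fin n))
    (ξ : Metric.sphere (0 : EuclideanSpace ℂ (Fin n)) 1) :
    Metric.sphere (0 : EuclideanSpace ℂ (Fin n)) 1 :=
  ⟨e ξ, by
    rw [mem_sphere_zero_iff_norm, e.norm_map]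
    exact mem_sphere_zero_iff_norm.mp ξ.2⟩

/-- A real-linear isometry equivalence of `ℂⁿ` restricts to a measurable equivalence of the
unit sphere. -/
noncomputable def sphereMap (e : EuclideanSpace ℂ (Fin n) ≃ₗᵢ[ℝ] EuclideanSpace ℂ (Fin n)) :
    Metric.sphere (0 : EuclideanSpace ℂ (Fin n)) 1 ≃ᵐ
      Metric.sphere (0 : EuclideanSpace ℂ (Fin n)) 1 :=
  Homeomorph.toMeasurableEquiv
    { toFun := sphereFun e
      invFun := sphereFun e.symm
      left_inv := fun ξ => by ext1; simp [sphereFun]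
      right_inv := fun ξ => by ext1; simp [sphereFun]
      continuous_toFun := Continuous.subtype_mk (e.continuous.comp continuous_subtype_val) _
      continuous_invFun := Continuous.subtype_mk (e.symm.continuous.comp continuous_subtype_val) _ }

@[simp] lemma sphereMap_coe (e : EuclideanSpace ℂ (Fin n) ≃ₗᵢ[ℝ] EuclideanSpace ℂ (Fin n))
    (ξ : Metric.sphere (0 : EuclideanSpace ℂ (Fin n)) 1) :
    ((sphereMap e ξ : Metric.sphere (0 : EuclideanSpace ℂ (Fin n)) 1) :
      EuclideanSpace ℂ (Fin n)) = e (ξ : EuclideanSpace ℂ (Fin n)) := rfl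

lemma map_sphereMap (e : EuclideanSpace ℂ (Fin n) ≃ₗᵢ[ℝ] EuclideanSpace ℂ (Fin n)) :
    (complexSphereMeasure n).map (sphereMap e) = complexSphereMeasure n := by
  unfold complexSphereMeasure
  ext s hs
  rw [MeasurableEquiv.map_apply, Measure.toSphere_apply' _ ((sphereMap e).measurable hs),
    Measure.toSphere_apply' _ hs]
  congr 1
  have h1 : (Ioo (0:ℝ) 1 • (Subtype.val '' ((sphereMap e) ⁻¹' s)))
      = ⇑e ⁻¹' (Ioo (0:ℝ) 1 • (Subtype.val '' s)) := by
    ext x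
    constructor
    · rintro ⟨r, hr, y, ⟨ξ, hξ, rfl⟩, rfl⟩
      exact ⟨r, hr, (sphereMap e ξ : EuclideanSpace ℂ (Fin n)), ⟨sphereMap e ξ, hξ, rfl⟩, by
        show r • e ↑ξ = e (r • ↑ξ)
        rw [e.map_smul]⟩
    · rintro ⟨r, hr, y, ⟨σ, hσ, rfl⟩, hx⟩
      refine ⟨r, hr, ((sphereMap e).symm σ : EuclideanSpace ℂ (Fin n)),
        ⟨(sphereMap e).symm σ, by simpa using hσ, rfl⟩, ?_⟩
      have hc : ((sphereMap e).symm σ : EuclideanSpace ℂ (Fin n)) = e.symm σ := rfl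
      have := congrArg e.symm hx
      rw [e.symm_apply_apply] at this
      show r • e.symm ↑σ = x
      rw [← e.symm.map_smul r (↑σ : EuclideanSpace ℂ (Fin n))]
      exact this
  rw [h1]
  have h2 : volume (⇑e ⁻¹' (Ioo (0:ℝ) 1 • (Subtype.val '' s)))
      = (volume.map e.toHomeomorph.toMeasurableEquiv) (Ioo (0:ℝ) 1 • (Subtype.val '' s)) := by
    rw [MeasurableEquiv.map_apply]; rfl
  rw [h2]
  have h3 : (volume.map e.toHomeomorph.toMeasurableEquiv : Measure (EuclideanSpace ℂ (Fin n)))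
      = volume.map e := rfl
  rw [h3, (e.measurePreserving).map_eq]

lemma integral_sphereMap (e : EuclideanSpace ℂ (Fin n) ≃ₗᵢ[ℝ] EuclideanSpace ℂ (Fin n))
    (f : Metric.sphere (0 : EuclideanSpace ℂ (Fin n)) 1 → ℂ) :
    ∫ ξ, f (sphereMap e ξ) ∂(complexSphereMeasure n) = ∫ ξ, f ξ ∂(complexSphereMeasure n) := by
  have mp : MeasurePreserving (sphereMap e) (complexSphereMeasure n) (complexSphereMeasure n) :=
    ⟨(sphereMap e).measurable, map_sphereMap e⟩
  exact mp.integral_comp (sphereMap e).measurableEmbedding f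


instance : IsFiniteMeasure (complexSphereMeasure n) := by
  unfold complexSphereMeasure; infer_instance

instance : IsFiniteMeasureOnCompacts (complexSphereMeasure n) :=
  ⟨fun _ _ => measure_lt_top _ _⟩

/-- monomial integral -/
noncomputable def M (n : ℕ) (i j k l : Fin n) : ℂ :=
  ∫ ξ : Metric.sphere (0 : EuclideanSpace ℂ (Fin n)) 1,
      (starRingEnd ℂ) ((ξ : EuclideanSpace ℂ (Fin n)) i)
        * (ξ : EuclideanSpace ℂ (Fin n)) j
        * (ξ : EuclideanSpace ℂ (Fin n)) k
        * (starRingEnd ℂ) ((ξ : EuclideanSpace ℂ (Fin n)) l)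
      ∂(complexSphereMeasure n)

lemma continuous_coord (i : Fin n) :
    Continuous (fun ξ : Metric.sphere (0 : EuclideanSpace ℂ (Fin n)) 1 =>
      (ξ : EuclideanSpace ℂ (Fin n)) i) :=
  (PiLp.continuous_apply 2 _ i).comp continuous_subtype_val

lemma continuous_mon (i j k l : Fin n) :
    Continuous (fun ξ : Metric.sphere (0 : EuclideanSpace ℂ (Fin n)) 1 =>
      (starRingEnd ℂ) ((ξ : EuclideanSpace ℂ (Fin n)) i)
        * (ξ : EuclideanSpace ℂ (Fin n)) j
        * (ξ : EuclideanSpace ℂ (Fin n)) k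
        * (starRingEnd ℂ) ((ξ : EuclideanSpace ℂ (Fin n)) l)) := by
  exact (((Complex.continuous_conj.comp (continuous_coord i)).mul (continuous_coord j)).mul
    (continuous_coord k)).mul (Complex.continuous_conj.comp (continuous_coord l))

lemma integrable_mon (i j k l : Fin n) :
    Integrable (fun ξ : Metric.sphere (0 : EuclideanSpace ℂ (Fin n)) 1 =>
      (starRingEnd ℂ) ((ξ : EuclideanSpace ℂ (Fin n)) i)
        * (ξ : EuclideanSpace ℂ (Fin n)) j
        * (ξ : EuclideanSpace ℂ (Fin n)) k
        * (starRingEnd ℂ) ((ξ : EuclideanSpace ℂ (Fin n)) l)) (complexSphereMeasure n) :=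
  (continuous_mon i j k l).integrable_of_hasCompactSupport
    (isClosed_tsupport _).isCompact

/-- composing the monomial integral with an isometry -/
lemma M_eq_comp (i j k l : Fin n) (e : EuclideanSpace ℂ (Fin n) ≃ₗᵢ[ℝ] EuclideanSpace ℂ (Fin n)) :
    ∫ ξ : Metric.sphere (0 : EuclideanSpace ℂ (Fin n)) 1,
      (starRingEnd ℂ) ((e (ξ : EuclideanSpace ℂ (Fin n))) i)
        * (e (ξ : EuclideanSpace ℂ (Fin n))) j
        * (e (ξ : EuclideanSpace ℂ (Fin n))) k
        * (starRingEnd ℂ) ((e (ξ : EuclideanSpace ℂ (Fin n))) l)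
      ∂(complexSphereMeasure n) = M n i j k l :=
  integral_sphereMap e (fun ξ =>
    (starRingEnd ℂ) ((ξ : EuclideanSpace ℂ (Fin n)) i)
      * (ξ : EuclideanSpace ℂ (Fin n)) j
      * (ξ : EuclideanSpace ℂ (Fin n)) k
      * (starRingEnd ℂ) ((ξ : EuclideanSpace ℂ (Fin n)) l))


/-- the circle element I -/
noncomputable def circleI : Circle := ⟨Complex.I, by
  simp [Submonoid.unitSphere, Metric.mem_sphere, Complex.norm_I]⟩

@[simp] lemma circleI_coe : (circleI : ℂ) = Complex.I := rfl

/-- multiply coordinate `m` by `I` -/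
noncomputable def phase (m : Fin n) :
    EuclideanSpace ℂ (Fin n) ≃ₗᵢ[ℝ] EuclideanSpace ℂ (Fin n) :=
  LinearIsometryEquiv.piLpCongrRight 2
    (fun p => if p = m then rotation circleI else LinearIsometryEquiv.refl ℝ ℂ)

lemma phase_apply (m p : Fin n) (x : EuclideanSpace ℂ (Fin n)) :
    phase m x p = if p = m then Complex.I * x p else x p := by
  rw [phase, LinearIsometryEquiv.piLpCongrRight_apply]
  by_cases h : p = m
  · subst h; simp [rotation_apply]
  · simp [h]

lemma M_zero_aux (i j k l m : Fin n)
    (h : (if i = m then -Complex.I else 1) * (if j = m then Complex.I else 1)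
        * (if k = m then Complex.I else 1) * (if l = m then -Complex.I else 1) ≠ 1) :
    M n i j k l = 0 := by
  set φ := (if i = m then -Complex.I else 1) * (if j = m then Complex.I else 1)
      * (if k = m then Complex.I else 1) * (if l = m then -Complex.I else 1) with hφ
  have h1 := M_eq_comp i j k l (phase m)
  have h2 : ∀ ξ : Metric.sphere (0 : EuclideanSpace ℂ (Fin n)) 1,
      (starRingEnd ℂ) ((phase m (ξ : EuclideanSpace ℂ (Fin n))) i)
        * (phase m (ξ : EuclideanSpace ℂ (Fin n))) j
        * (phase m (ξ : EuclideanSpace ℂ (Fin n))) k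
        * (starRingEnd ℂ) ((phase m (ξ : EuclideanSpace ℂ (Fin n))) l)
      = φ * ((starRingEnd ℂ) ((ξ : EuclideanSpace ℂ (Fin n)) i)
        * (ξ : EuclideanSpace ℂ (Fin n)) j
        * (ξ : EuclideanSpace ℂ (Fin n)) k
        * (starRingEnd ℂ) ((ξ : EuclideanSpace ℂ (Fin n)) l)) := by
    intro ξ
    rw [hφ, phase_apply, phase_apply, phase_apply, phase_apply]
    by_cases hi : i = m <;> by_cases hj : j = m <;> by_cases hk : k = m <;>
      by_cases hl : l = m <;>
      simp only [hi, hj, hk, hl, if_true, if_false, map_mul, Complex.conj_I, ite_true,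
        ite_false] <;> ring
  rw [show (fun ξ : Metric.sphere (0 : EuclideanSpace ℂ (Fin n)) 1 =>
      (starRingEnd ℂ) ((phase m (ξ : EuclideanSpace ℂ (Fin n))) i)
        * (phase m (ξ : EuclideanSpace ℂ (Fin n))) j
        * (phase m (ξ : EuclideanSpace ℂ (Fin n))) k
        * (starRingEnd ℂ) ((phase m (ξ : EuclideanSpace ℂ (Fin n))) l))
      = (fun ξ : Metric.sphere (0 : EuclideanSpace ℂ (Fin n)) 1 =>
        φ * ((starRingEnd ℂ) ((ξ : EuclideanSpace ℂ (Fin n)) i)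
        * (ξ : EuclideanSpace ℂ (Fin n)) j
        * (ξ : EuclideanSpace ℂ (Fin n)) k
        * (starRingEnd ℂ) ((ξ : EuclideanSpace ℂ (Fin n)) l)))
      from funext h2, integral_const_mul] at h1
  have h1' : φ * M n i j k l = M n i j k l := h1
  have h3 : (φ - 1) * M n i j k l = 0 := by
    rw [sub_mul, one_mul, h1', sub_self]
  rcases mul_eq_zero.mp h3 with h4 | h4
  · exact absurd (sub_eq_zero.mp h4) h
  · exact h4

/-- the general vanishing lemma -/
lemma M_zero_of (i j k l : Fin n) (h1 : ¬(i = j ∧ k = l)) (h2 : ¬(i = k ∧ j = l)) :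
    M n i j k l = 0 := by
  by_cases hij : i = j
  · have hkl : k ≠ l := fun h => h1 ⟨hij, h⟩
    apply M_zero_aux i j k l k
    subst hij
    by_cases hik : i = k <;>
      simp [hik, hkl.symm, Complex.ext_iff]
  · by_cases hik : i = k
    · have hjl : j ≠ l := fun h => h2 ⟨hik, h⟩
      apply M_zero_aux i j k l j
      subst hik
      simp [Ne.symm hij, hjl.symm, fun h => hij (h : i = j), Complex.ext_iff]
    · apply M_zero_aux i j k l i
      by_cases hli : l = i <;>
        norm_num [hli, Ne.symm hij, Ne.symm hik, Complex.ext_iff]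


noncomputable def sq2 : ℂ := ((Real.sqrt 2 : ℝ) : ℂ)

lemma sq2_mul_self : sq2 * sq2 = 2 := by
  rw [sq2, ← Complex.ofReal_mul, Real.mul_self_sqrt (by norm_num)]
  norm_num

lemma sq2_ne_zero : sq2 ≠ 0 := by
  intro h
  have := sq2_mul_self
  rw [h, mul_zero] at this
  norm_num at this

/-- the Hadamard-type mixing map on coordinates `a`, `b` -/
noncomputable def hadFun (a b : Fin n) (x : EuclideanSpace ℂ (Fin n)) :
    EuclideanSpace ℂ (Fin n) :=
  WithLp.toLp 2 (fun p => if p = a then (x a + x b) / sq2 else if p = b then (x a - x b) / sq2 else x p)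

lemma hadFun_apply_a (a b : Fin n) (x : EuclideanSpace ℂ (Fin n)) :
    hadFun a b x a = (x a + x b) / sq2 := by simp [hadFun]

lemma hadFun_apply_b (a b : Fin n) (hab : a ≠ b) (x : EuclideanSpace ℂ (Fin n)) :
    hadFun a b x b = (x a - x b) / sq2 := by simp [hadFun, Ne.symm hab]

lemma hadFun_apply_other (a b p : Fin n) (hpa : p ≠ a) (hpb : p ≠ b)
    (x : EuclideanSpace ℂ (Fin n)) : hadFun a b x p = x p := by simp [hadFun, hpa, hpb]

lemma hadFun_invol (a b : Fin n) (hab : a ≠ b) : Function.Involutive (hadFun a b) := by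
  intro x
  ext p
  have h2 := sq2_mul_self
  have h0 := sq2_ne_zero
  by_cases ha : p = a
  · rw [ha, hadFun_apply_a, hadFun_apply_a, hadFun_apply_b a b hab]
    field_simp
    rw [sq, sq2_mul_self]
    ring
  · by_cases hb : p = b
    · rw [hb, hadFun_apply_b a b hab, hadFun_apply_a, hadFun_apply_b a b hab]
      field_simp
      rw [sq, sq2_mul_self]
      ring
    · rw [hadFun_apply_other a b p ha hb, hadFun_apply_other a b p ha hb]

lemma hadFun_add (a b : Fin n) (hab : a ≠ b) (x y : EuclideanSpace ℂ (Fin n)) :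
    hadFun a b (x + y) = hadFun a b x + hadFun a b y := by
  ext p
  have hx : ∀ q, (x + y) q = x q + y q := fun q => rfl
  have hsum : ∀ (u v : EuclideanSpace ℂ (Fin n)) q, (u + v) q = u q + v q := fun u v q => rfl
  rw [hsum]
  by_cases ha : p = a
  · rw [ha, hadFun_apply_a, hadFun_apply_a, hadFun_apply_a, hx, hx]
    ring
  · by_cases hb : p = b
    · rw [hb, hadFun_apply_b a b hab, hadFun_apply_b a b hab, hadFun_apply_b a b hab, hx, hx]
      ring
    · rw [hadFun_apply_other a b p ha hb, hadFun_apply_other a b p ha hb,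
        hadFun_apply_other a b p ha hb, hx]

lemma hadFun_smul (a b : Fin n) (hab : a ≠ b) (r : ℝ) (x : EuclideanSpace ℂ (Fin n)) :
    hadFun a b (r • x) = r • hadFun a b x := by
  ext p
  have hx : ∀ (z : EuclideanSpace ℂ (Fin n)) q, (r • z) q = (r : ℂ) * z q := fun z q => rfl
  rw [hx]
  by_cases ha : p = a
  · rw [ha, hadFun_apply_a, hadFun_apply_a, hx, hx]
    ring
  · by_cases hb : p = b
    · rw [hb, hadFun_apply_b a b hab, hadFun_apply_b a b hab, hx, hx]
      ring
    · rw [hadFun_apply_other a b p ha hb, hadFun_apply_other a b p ha hb, hx]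

lemma norm_sq_complex (z : ℂ) : ‖z‖ ^ 2 = Complex.normSq z := by
  exact Complex.sq_norm z

lemma norm_div_sq2_sq (z : ℂ) : ‖z / sq2‖ ^ 2 = ‖z‖ ^ 2 / 2 := by
  rw [norm_div, div_pow, norm_sq_complex sq2]
  congr 1
  simp [sq2, Complex.normSq_apply, Real.mul_self_sqrt]

lemma hadFun_norm (a b : Fin n) (hab : a ≠ b) (x : EuclideanSpace ℂ (Fin n)) :
    ‖hadFun a b x‖ = ‖x‖ := by
  rw [EuclideanSpace.norm_eq, EuclideanSpace.norm_eq]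
  congr 1
  rw [← Finset.sum_compl_add_sum ({a, b} : Finset (Fin n))
      (fun p => ‖hadFun a b x p‖ ^ 2),
    ← Finset.sum_compl_add_sum ({a, b} : Finset (Fin n)) (fun p => ‖x p‖ ^ 2)]
  congr 1
  · refine Finset.sum_congr rfl fun p hp => ?_
    rw [Finset.mem_compl, Finset.mem_insert, Finset.mem_singleton] at hp
    push_neg at hp
    rw [hadFun_apply_other a b p hp.1 hp.2]
  · rw [Finset.sum_pair hab, Finset.sum_pair hab, hadFun_apply_a,
      hadFun_apply_b a b hab, norm_div_sq2_sq, norm_div_sq2_sq,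
      norm_sq_complex, norm_sq_complex, norm_sq_complex, norm_sq_complex]
    simp only [Complex.normSq_apply, Complex.add_re, Complex.add_im, Complex.sub_re,
      Complex.sub_im]
    ring

/-- the Hadamard-type mixing isometry -/
noncomputable def had (a b : Fin n) (hab : a ≠ b) :
    EuclideanSpace ℂ (Fin n) ≃ₗᵢ[ℝ] EuclideanSpace ℂ (Fin n) where
  toFun := hadFun a b
  invFun := hadFun a b
  left_inv := hadFun_invol a b hab
  right_inv := hadFun_invol a b hab
  map_add' := hadFun_add a b hab
  map_smul' := hadFun_smul a b hab
  norm_map' := hadFun_norm a b hab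

lemma had_coe (a b : Fin n) (hab : a ≠ b) (x : EuclideanSpace ℂ (Fin n)) :
    had a b hab x = hadFun a b x := rfl


lemma M_comm1 (p q : Fin n) : M n p q p q = M n p p q q := by
  unfold M; congr 1; funext ξ; ring

lemma M_comm2 (p q : Fin n) : M n q q p p = M n p p q q := by
  unfold M; congr 1; funext ξ; ring

lemma M_comm3 (p q : Fin n) : M n q p q p = M n p p q q := by
  unfold M; congr 1; funext ξ; ring

lemma div_sq2_four (w x y z : ℂ) :
    w / sq2 * (x / sq2) * (y / sq2) * (z / sq2) = w * x * y * z / 4 := by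
  have h4 : sq2 * sq2 * (sq2 * sq2) = 4 := by rw [sq2_mul_self]; norm_num
  calc w / sq2 * (x / sq2) * (y / sq2) * (z / sq2)
      = w * x * y * z / (sq2 * sq2 * (sq2 * sq2)) := by ring
    _ = w * x * y * z / 4 := by rw [h4]

lemma sum_M (hn : 1 ≤ n) :
    ∑ p : Fin n, ∑ q : Fin n, M n p p q q
      = (((complexSphereMeasure n) Set.univ).toReal : ℂ) := by
  have hnorm : ∀ ξ : Metric.sphere (0 : EuclideanSpace ℂ (Fin n)) 1,
      (∑ p, Complex.normSq ((ξ : EuclideanSpace ℂ (Fin n)) p)) = (1:ℝ) := by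
    intro ξ
    have h1 : ‖(ξ : EuclideanSpace ℂ (Fin n))‖ = 1 := mem_sphere_zero_iff_norm.mp ξ.2
    rw [EuclideanSpace.norm_eq] at h1
    have h2 : (∑ p, ‖(ξ : EuclideanSpace ℂ (Fin n)) p‖ ^ 2) = 1 := by
      have := congrArg (fun t => t ^ 2) h1
      simpa [Real.sq_sqrt (Finset.sum_nonneg fun p _ => sq_nonneg _)] using this
    calc (∑ p, Complex.normSq ((ξ : EuclideanSpace ℂ (Fin n)) p))
        = ∑ p, ‖(ξ : EuclideanSpace ℂ (Fin n)) p‖ ^ 2 :=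
          Finset.sum_congr rfl fun p _ => (norm_sq_complex _).symm
      _ = 1 := h2
  have hpt : ∀ ξ : Metric.sphere (0 : EuclideanSpace ℂ (Fin n)) 1,
      (∑ p, ∑ q, (starRingEnd ℂ) ((ξ : EuclideanSpace ℂ (Fin n)) p)
          * (ξ : EuclideanSpace ℂ (Fin n)) p
          * (ξ : EuclideanSpace ℂ (Fin n)) q
          * (starRingEnd ℂ) ((ξ : EuclideanSpace ℂ (Fin n)) q)) = (1 : ℂ) := by
    intro ξ
    have e1 : ∀ p : Fin n, ∑ q, (starRingEnd ℂ) ((ξ : EuclideanSpace ℂ (Fin n)) p)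
          * (ξ : EuclideanSpace ℂ (Fin n)) p
          * (ξ : EuclideanSpace ℂ (Fin n)) q
          * (starRingEnd ℂ) ((ξ : EuclideanSpace ℂ (Fin n)) q)
        = ((starRingEnd ℂ) ((ξ : EuclideanSpace ℂ (Fin n)) p)
            * (ξ : EuclideanSpace ℂ (Fin n)) p)
          * ∑ q, (Complex.normSq ((ξ : EuclideanSpace ℂ (Fin n)) q) : ℂ) := by
      intro p
      rw [Finset.mul_sum]
      refine Finset.sum_congr rfl fun q _ => ?_
      rw [← Complex.mul_conj]
      ring
    rw [Finset.sum_congr rfl fun p _ => e1 p, ← Finset.sum_mul]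
    have e2 : (∑ p, (starRingEnd ℂ) ((ξ : EuclideanSpace ℂ (Fin n)) p)
        * (ξ : EuclideanSpace ℂ (Fin n)) p)
        = ∑ p, (Complex.normSq ((ξ : EuclideanSpace ℂ (Fin n)) p) : ℂ) := by
      refine Finset.sum_congr rfl fun p _ => ?_
      rw [← Complex.mul_conj]
      ring
    rw [e2, ← Complex.ofReal_sum, hnorm]
    norm_num
  have step1 : ∑ p : Fin n, ∑ q : Fin n, M n p p q q
      = ∫ ξ : Metric.sphere (0 : EuclideanSpace ℂ (Fin n)) 1,
          (∑ p, ∑ q, (starRingEnd ℂ) ((ξ : EuclideanSpace ℂ (Fin n)) p)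
            * (ξ : EuclideanSpace ℂ (Fin n)) p
            * (ξ : EuclideanSpace ℂ (Fin n)) q
            * (starRingEnd ℂ) ((ξ : EuclideanSpace ℂ (Fin n)) q))
          ∂(complexSphereMeasure n) := by
    rw [integral_finset_sum _ (fun p _ => integrable_finset_sum _
      (fun q _ => integrable_mon p p q q))]
    refine Finset.sum_congr rfl fun p _ => ?_
    rw [integral_finset_sum _ (fun q _ => integrable_mon p p q q)]
    rfl
  rw [step1]
  rw [show (fun ξ : Metric.sphere (0 : EuclideanSpace ℂ (Fin n)) 1 =>
      (∑ p, ∑ q, (starRingEnd ℂ) ((ξ : EuclideanSpace ℂ (Fin n)) p)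
        * (ξ : EuclideanSpace ℂ (Fin n)) p
        * (ξ : EuclideanSpace ℂ (Fin n)) q
        * (starRingEnd ℂ) ((ξ : EuclideanSpace ℂ (Fin n)) q)))
      = (fun _ : Metric.sphere (0 : EuclideanSpace ℂ (Fin n)) 1 => (1:ℂ)) from funext hpt]
  rw [integral_const]
  simp [Complex.real_smul]
  rfl

lemma key (p q : Fin n) (hpq : p ≠ q) :
    M n p p p p = (1/4) * (M n p p p p + M n q q q q + 4 * M n p p q q) := by
  have hcomp := M_eq_comp p p p p (had p q hpq)
  set S : Finset (Fin n × Fin n × Fin n × Fin n) :=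
    ({p, q} : Finset (Fin n)) ×ˢ (({p, q} : Finset (Fin n)) ×ˢ
      (({p, q} : Finset (Fin n)) ×ˢ ({p, q} : Finset (Fin n)))) with hS
  have hpt : ∀ ξ : Metric.sphere (0 : EuclideanSpace ℂ (Fin n)) 1,
      (starRingEnd ℂ) ((had p q hpq (ξ : EuclideanSpace ℂ (Fin n))) p)
        * (had p q hpq (ξ : EuclideanSpace ℂ (Fin n))) p
        * (had p q hpq (ξ : EuclideanSpace ℂ (Fin n))) p
        * (starRingEnd ℂ) ((had p q hpq (ξ : EuclideanSpace ℂ (Fin n))) p)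
      = (1/4 : ℂ) * ∑ t ∈ S,
          (starRingEnd ℂ) ((ξ : EuclideanSpace ℂ (Fin n)) t.1)
            * (ξ : EuclideanSpace ℂ (Fin n)) t.2.1
            * (ξ : EuclideanSpace ℂ (Fin n)) t.2.2.1
            * (starRingEnd ℂ) ((ξ : EuclideanSpace ℂ (Fin n)) t.2.2.2) := by
    intro ξ
    rw [had_coe, hadFun_apply_a]
    have hconj : (starRingEnd ℂ)
        (((ξ : EuclideanSpace ℂ (Fin n)) p + (ξ : EuclideanSpace ℂ (Fin n)) q) / sq2)
        = ((starRingEnd ℂ) ((ξ : EuclideanSpace ℂ (Fin n)) p)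
            + (starRingEnd ℂ) ((ξ : EuclideanSpace ℂ (Fin n)) q)) / sq2 := by
      rw [map_div₀, map_add, show (starRingEnd ℂ) sq2 = sq2 from Complex.conj_ofReal _]
    rw [hconj, div_sq2_four]
    simp only [hS, Finset.sum_product, Finset.sum_pair hpq]
    ring
  have hrw : (fun ξ : Metric.sphere (0 : EuclideanSpace ℂ (Fin n)) 1 =>
      (starRingEnd ℂ) ((had p q hpq (ξ : EuclideanSpace ℂ (Fin n))) p)
        * (had p q hpq (ξ : EuclideanSpace ℂ (Fin n))) p
        * (had p q hpq (ξ : EuclideanSpace ℂ (Fin n))) p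
        * (starRingEnd ℂ) ((had p q hpq (ξ : EuclideanSpace ℂ (Fin n))) p))
      = (fun ξ : Metric.sphere (0 : EuclideanSpace ℂ (Fin n)) 1 =>
        (1/4 : ℂ) * ∑ t ∈ S,
          (starRingEnd ℂ) ((ξ : EuclideanSpace ℂ (Fin n)) t.1)
            * (ξ : EuclideanSpace ℂ (Fin n)) t.2.1
            * (ξ : EuclideanSpace ℂ (Fin n)) t.2.2.1
            * (starRingEnd ℂ) ((ξ : EuclideanSpace ℂ (Fin n)) t.2.2.2)) := funext hpt
  rw [hrw, integral_const_mul,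
    integral_finset_sum _ (fun t _ => integrable_mon t.1 t.2.1 t.2.2.1 t.2.2.2)] at hcomp
  have hsum : ∑ t ∈ S, M n t.1 t.2.1 t.2.2.1 t.2.2.2
      = M n p p p p + M n q q q q + 4 * M n p p q q := by
    have hqp := Ne.symm hpq
    simp only [hS, Finset.sum_product, Finset.sum_pair hpq]
    rw [M_zero_of p p p q (by rintro ⟨h1, h2⟩; first | exact hpq h1 | exact hpq h2 | exact hpq h1.symm | exact hpq h2.symm) (by rintro ⟨h1, h2⟩; first | exact hpq h1 | exact hpq h2 | exact hpq h1.symm | exact hpq h2.symm),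
      M_zero_of p p q p (by rintro ⟨h1, h2⟩; first | exact hpq h1 | exact hpq h2 | exact hpq h1.symm | exact hpq h2.symm) (by rintro ⟨h1, h2⟩; first | exact hpq h1 | exact hpq h2 | exact hpq h1.symm | exact hpq h2.symm),
      M_zero_of p q p p (by rintro ⟨h1, h2⟩; first | exact hpq h1 | exact hpq h2 | exact hpq h1.symm | exact hpq h2.symm) (by rintro ⟨h1, h2⟩; first | exact hpq h1 | exact hpq h2 | exact hpq h1.symm | exact hpq h2.symm),
      M_zero_of q p p p (by rintro ⟨h1, h2⟩; first | exact hpq h1 | exact hpq h2 | exact hpq h1.symm | exact hpq h2.symm) (by rintro ⟨h1, h2⟩; first | exact hpq h1 | exact hpq h2 | exact hpq h1.symm | exact hpq h2.symm),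
      M_zero_of p q q p (by rintro ⟨h1, h2⟩; first | exact hpq h1 | exact hpq h2 | exact hpq h1.symm | exact hpq h2.symm) (by rintro ⟨h1, h2⟩; first | exact hpq h1 | exact hpq h2 | exact hpq h1.symm | exact hpq h2.symm),
      M_zero_of q p p q (by rintro ⟨h1, h2⟩; first | exact hpq h1 | exact hpq h2 | exact hpq h1.symm | exact hpq h2.symm) (by rintro ⟨h1, h2⟩; first | exact hpq h1 | exact hpq h2 | exact hpq h1.symm | exact hpq h2.symm),
      M_zero_of p q q q (by rintro ⟨h1, h2⟩; first | exact hpq h1 | exact hpq h2 | exact hpq h1.symm | exact hpq h2.symm) (by rintro ⟨h1, h2⟩; first | exact hpq h1 | exact hpq h2 | exact hpq h1.symm | exact hpq h2.symm),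
      M_zero_of q p q q (by rintro ⟨h1, h2⟩; first | exact hpq h1 | exact hpq h2 | exact hpq h1.symm | exact hpq h2.symm) (by rintro ⟨h1, h2⟩; first | exact hpq h1 | exact hpq h2 | exact hpq h1.symm | exact hpq h2.symm),
      M_zero_of q q p q (by rintro ⟨h1, h2⟩; first | exact hpq h1 | exact hpq h2 | exact hpq h1.symm | exact hpq h2.symm) (by rintro ⟨h1, h2⟩; first | exact hpq h1 | exact hpq h2 | exact hpq h1.symm | exact hpq h2.symm),
      M_zero_of q q q p (by rintro ⟨h1, h2⟩; first | exact hpq h1 | exact hpq h2 | exact hpq h1.symm | exact hpq h2.symm) (by rintro ⟨h1, h2⟩; first | exact hpq h1 | exact hpq h2 | exact hpq h1.symm | exact hpq h2.symm),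
      M_comm1 p q, M_comm2 p q, M_comm3 p q]
    ring
  have hcomp' : (1/4 : ℂ) * ∑ t ∈ S, M n t.1 t.2.1 t.2.2.1 t.2.2.2 = M n p p p p := hcomp
  rw [hsum] at hcomp'
  exact hcomp'.symm


lemma A_eq (p q : Fin n) (hpq : p ≠ q) : M n p p p p = M n q q q q := by
  have k1 := key p q hpq
  have k2 := key q p (Ne.symm hpq)
  rw [M_comm2 p q] at k2
  linear_combination k1 - k2

lemma A_const (r p : Fin n) : M n p p p p = M n r r r r := by
  by_cases h : p = r
  · rw [h]
  · exact A_eq p r h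

lemma B_half (p q : Fin n) (hpq : p ≠ q) : M n p p q q = M n p p p p / 2 := by
  have k1 := key p q hpq
  have hA := A_eq p q hpq
  linear_combination -k1 + (1/4 : ℂ) * hA

lemma A_val (hn : 1 ≤ n) (r : Fin n) :
    (n : ℂ) * ((n : ℂ) + 1) * M n r r r r
      = 2 * (((complexSphereMeasure n) Set.univ).toReal : ℂ) := by
  have hs := sum_M (n := n) hn
  have hterm : ∀ p q : Fin n, M n p p q q
      = (if q = p then M n r r r r / 2 else 0) + M n r r r r / 2 := by
    intro p q
    by_cases h : q = p
    · rw [if_pos h, h, A_const r p]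
      ring
    · rw [if_neg h, B_half p q (Ne.symm h), A_const r p]
      ring
  rw [Finset.sum_congr rfl (fun p _ => Finset.sum_congr rfl (fun q _ => hterm p q))] at hs
  simp only [Finset.sum_add_distrib, Finset.sum_ite_eq' Finset.univ, Finset.mem_univ,
    if_true, Finset.sum_const, Finset.card_univ, Fintype.card_fin, nsmul_eq_mul] at hs
  -- hs : ∑ p, (M r r r r / 2 + n * (M r r r r / 2)) = V  (roughly)
  linear_combination 2 * hs

lemma B_val (hn : 1 ≤ n) (p q : Fin n) (hpq : p ≠ q) :
    (n : ℂ) * ((n : ℂ) + 1) * M n p p q q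
      = (((complexSphereMeasure n) Set.univ).toReal : ℂ) := by
  have h1 := B_half p q hpq
  have h2 := A_val hn p
  linear_combination (n : ℂ) * ((n : ℂ) + 1) * h1 + (1/2 : ℂ) * h2

end Berger

/-- **Berger's averaging identity (formula (5.8)).** For every `n ≥ 1` and all indices
`i, j, k, l ∈ {1, …, n}`, the integral over the unit sphere `S^{2n-1} ⊂ ℂⁿ` (with its
standard volume measure) of the monomial `ξ̄^i ξ^j ξ^k ξ̄^l` in the complex coordinates
`ξ = (ξ¹, …, ξⁿ)` equals `((δ_{ij} δ_{kl} + δ_{ik} δ_{jl})/(n(n+1))) ⬝ Vol(S^{2n-1})`. -/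
theorem integral_sphere_monomial (n : ℕ) (hn : 1 ≤ n) (i j k l : Fin n) :
    ∫ ξ : Metric.sphere (0 : EuclideanSpace ℂ (Fin n)) 1,
        (starRingEnd ℂ) ((ξ : EuclideanSpace ℂ (Fin n)) i)
          * (ξ : EuclideanSpace ℂ (Fin n)) j
          * (ξ : EuclideanSpace ℂ (Fin n)) k
          * (starRingEnd ℂ) ((ξ : EuclideanSpace ℂ (Fin n)) l)
        ∂(complexSphereMeasure n)
      = (((if i = j then 1 else 0) * (if k = l then 1 else 0)
            + (if i = k then 1 else 0) * (if j = l then 1 else 0)) / (n * (n + 1)) : ℂ)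
        * (((complexSphereMeasure n) Set.univ).toReal : ℂ) := by
  show Berger.M n i j k l = _
  have hn0 : (n : ℂ) ≠ 0 := Nat.cast_ne_zero.mpr (by omega)
  have hn1 : ((n : ℂ) + 1) ≠ 0 := by
    intro h
    have : ((n + 1 : ℕ) : ℂ) = 0 := by push_cast; linear_combination h
    exact Nat.cast_ne_zero.mpr (Nat.succ_ne_zero n) this
  by_cases h1 : i = j ∧ k = l
  · obtain ⟨hij, hkl⟩ := h1
    subst hij; subst hkl
    by_cases h2 : i = k
    · subst h2
      rw [if_pos rfl]
      have := Berger.A_val hn i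
      field_simp
      linear_combination this
    · rw [if_pos rfl, if_neg h2]
      have := Berger.B_val hn i k h2
      field_simp
      simp only [if_true]
      linear_combination this
  · by_cases h2 : i = k ∧ j = l
    · obtain ⟨hik, hjl⟩ := h2
      subst hik; subst hjl
      have hij : i ≠ j := fun h => h1 ⟨h, h⟩
      rw [if_neg hij, if_pos rfl, if_pos rfl]
      have hB := Berger.B_val hn i j hij
      have hcomm := Berger.M_comm1 (n := n) i j
      field_simp
      linear_combination ((n : ℂ) * ((n : ℂ) + 1)) * hcomm + hB
    · rw [Berger.M_zero_of i j k l h1 h2]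
      have hz : ((if i = j then (1:ℂ) else 0) * (if k = l then 1 else 0)
          + (if i = k then 1 else 0) * (if j = l then 1 else 0)) = 0 := by
        rcases not_and_or.mp h1 with h | h <;> rcases not_and_or.mp h2 with h' | h' <;>
          simp [h, h']
      rw [hz]
      simp
end
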